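/- Let G = C_p be the cycle graph on p vertices, and fix j*, k* ∈ {1,…,p}, z* ∈ {1,…,n} and t* ∈ {1,…,n−1}. Set τ := min(z*/n, 1 − z*/n) and assume nτ ≥ 2p. For j ∈ {1,…,p}, define ℓ(j) := (z* + d_G(j, j*)) − (t* + d_G(j, k*)), and let sgn(x) := 1 if x ≥ 0 and −1 if x < 0. Then the set 𝒥 := { j ∈ {1,…,p} : sgn(z* − t*)·ℓ(j) ≥ (|z* − t*| + d_G(j*, k*))/4 } has cardinality at least p/8. -/

import Mathlib

/-!
Write `d` for the cycle distance and `δ = d(a, b) ≤ p / 2`. Walking from `b` away from `a`, the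
vertex `x` reached after `m` steps has `d(x, b) = m` and `d(x, a) = min(δ + m, p - δ - m)`, so
`d(x, a) - d(x, b) ≥ δ / 4` as long as `16 m ≤ 3 p`; these are `⌊3p/16⌋ + 1 ≥ p / 8` vertices.
For the theorem take `(a, b) = (j*, k*)` if `t* ≤ z*` and `(k*, j*)` otherwise: then
`sgn(z* - t*) ℓ(j) = |z* - t*| + d(j, a) - d(j, b)`, and `|z* - t*| ≥ |z* - t*| / 4`.
-/

open MeasureTheory ProbabilityTheory Finset

noncomputable section

attribute [local instance] Classical.propDecidable

/-- The CUSUM transform of a `p × n` data matrix, at coordinate `j` and (1-based) time `t`. -/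
def cusum (n : ℕ) {V : Type} (M : V × Fin n → ℝ) (j : V) (t : ℕ) : ℝ :=
  Real.sqrt ((t : ℝ) * ((n : ℝ) - (t : ℝ)) / (n : ℝ)) *
    ((1 / ((n : ℝ) - (t : ℝ))) * ∑ r ∈ univ.filter (fun r : Fin n => t ≤ (r : ℕ)), M (j, r)
      - (1 / (t : ℝ)) * ∑ r ∈ univ.filter (fun r : Fin n => (r : ℕ) < t), M (j, r))

/-- The quadratic SpreadDetect statistic. -/
def Qstat (n : ℕ) {V : Type} [Fintype V] (gd : V → V → ℕ) (X : V × Fin n → ℝ)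
    (j : V) (t : ℕ) : ℝ :=
  ∑ k ∈ univ.filter (fun k : V => t + gd j k < n), ((cusum n X k (t + gd j k)) ^ 2 - 1)

/-- The linear SpreadDetect statistic. -/
def Lstat (n : ℕ) {V : Type} [Fintype V] (gd : V → V → ℕ) (X : V × Fin n → ℝ)
    (j : V) (t : ℕ) : ℝ :=
  |∑ k ∈ univ.filter (fun k : V => t + gd j k < n), cusum n X k (t + gd j k)|

/-- The law `P_{j*,z*,μ⁰,μ¹}` of the data matrix. -/
def spreadMeasure (n : ℕ) {V : Type} [Fintype V] (gd : V → V → ℕ) (jstar : V) (zstar : ℕ)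
    (μ0 μ1 : V → ℝ) : Measure (V × Fin n → ℝ) :=
  Measure.pi (fun jt : V × Fin n =>
    gaussianReal (if (jt.2 : ℕ) + 1 ≤ zstar + gd jt.1 jstar then μ0 jt.1 else μ1 jt.1) 1)

/-- The set `𝒥_{t*,k*}(C₁)`. -/
def JSet {V : Type} [Fintype V] (gd : V → V → ℕ) (jstar : V) (zstar : ℕ) (C1 : ℝ)
    (tstar : ℕ) (kstar : V) : Finset V :=
  univ.filter (fun j : V =>
    C1 * (|(zstar : ℝ) - (tstar : ℝ)| + (gd jstar kstar : ℝ)) ≤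
      |((zstar : ℝ) + (gd j jstar : ℝ)) - ((tstar : ℝ) + (gd j kstar : ℝ))|)

/-- `m_G(C₁)`, the minimal cardinality of `𝒥_{t*,k*}(C₁)` over `t* ∈ {1,…,n−1}`, `k* ∈ V`. -/
def mG (n : ℕ) {V : Type} [Fintype V] (gd : V → V → ℕ) (jstar : V) (zstar : ℕ)
    (C1 : ℝ) : ℕ :=
  sInf {c : ℕ | ∃ tstar : ℕ, 1 ≤ tstar ∧ tstar ≤ n - 1 ∧ ∃ kstar : V,
    c = (JSet gd jstar zstar C1 tstar kstar).card}

/-- The distance on the cycle graph `C_{p₁}` with vertices `Fin p₁`. -/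
def cycleDist (p1 : ℕ) (a b : Fin p1) : ℕ :=
  min ((a : ℤ) - (b : ℤ)).natAbs (p1 - ((a : ℤ) - (b : ℤ)).natAbs)

/-- The distance on the `d`-fold Cartesian product of cycles `C_{p₁}`. -/
def torusDist (p1 d : ℕ) (x y : Fin d → Fin p1) : ℕ :=
  ∑ r : Fin d, cycleDist p1 (x r) (y r)

lemma cycleDist_comm (p : ℕ) (a b : Fin p) : cycleDist p a b = cycleDist p b a := by
  unfold cycleDist; omega

lemma exists_injective_ray (p : ℕ) [NeZero p] (a b : Fin p) :
    ∃ f : Fin p → Fin p, Function.Injective f ∧ ∀ k : Fin p, 16 * (k : ℕ) ≤ 3 * p →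
      cycleDist p a b + 4 * cycleDist p (f k) b ≤ 4 * cycleDist p (f k) a := by
  -- `b` lies `d(a, b)` steps forward or backward from `a`; the ray keeps going that way from `b`.
  have hdir : ((b : ℕ) = a + cycleDist p a b ∨ (b : ℕ) + p = a + cycleDist p a b) ∨
      ((a : ℕ) = b + cycleDist p a b ∨ (a : ℕ) + p = b + cycleDist p a b) := by
    unfold cycleDist; omega
  rcases hdir with hdir | hdir
  · refine ⟨(b + ·), add_right_injective b, fun k hk => ?_⟩
    have := Fin.val_add_eq_ite b k
    dsimp only
    unfold cycleDist at *
    split_ifs at this <;> omega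
  · refine ⟨(b - ·), sub_right_injective, fun k hk => ?_⟩
    have : ((b - k : Fin p) : ℕ) = b - k ∨ ((b - k : Fin p) : ℕ) = p + b - k := by
      rcases le_or_gt k b with h | h
      · exact .inl (Fin.coe_sub_iff_le.2 h)
      · exact .inr (Fin.coe_sub_iff_lt.2 h)
    dsimp only
    unfold cycleDist at *
    omega

theorem le_eight_mul_card_filter_cycleDist (p : ℕ) (a b : Fin p) :
    p ≤ 8 * #({j | cycleDist p a b + 4 * cycleDist p j b ≤ 4 * cycleDist p j a} :
      Finset (Fin p)) := by
  rcases p.eq_zero_or_pos with rfl | hp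
  · simp
  have : NeZero p := ⟨hp.ne'⟩
  obtain ⟨f, hf, hray⟩ := exists_injective_ray p a b
  calc p ≤ 8 * #(Iic (⟨3 * p / 16, by omega⟩ : Fin p)) := by
        rw [Fin.card_Iic, Fin.val_mk]; omega
    _ ≤ _ := by
      refine Nat.mul_le_mul_left 8 (card_le_card_of_injOn f (fun k hk => ?_) hf.injOn)
      have : (k : ℕ) ≤ 3 * p / 16 := Fin.le_def.1 (mem_Iic.1 hk)
      simpa using hray k (by omega)

theorem div_eight_le_card_filter_of_imp {p : ℕ} (a b : Fin p) {P : Fin p → Prop}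
    [DecidablePred P]
    (hP : ∀ j, cycleDist p a b + 4 * cycleDist p j b ≤ 4 * cycleDist p j a → P j) :
    (p : ℝ) / 8 ≤ #(univ.filter P) := by
  have := (le_eight_mul_card_filter_cycleDist p a b).trans
    (Nat.mul_le_mul_left 8 (card_le_card (monotone_filter_right _ fun j _ => hP j)))
  rw [div_le_iff₀ (by norm_num)]
  exact_mod_cast (by omega : p ≤ #(univ.filter P) * 8)

/-- Proposition 4: on the cycle graph with nτ ≥ 2p, a set of cardinality at least p/8 of
coordinates have signed discrepancy at least (|z*−t*| + d(j*,k*))/4. -/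
theorem cycle_signed_discrepancy_set_lower_bound :
    ∀ (n p : ℕ), 1 ≤ n → 3 ≤ p →
    ∀ (jstar kstar : Fin p) (zstar tstar : ℕ),
      1 ≤ zstar → zstar ≤ n → 1 ≤ tstar → tstar ≤ n - 1 →
    ∀ τ : ℝ, τ = min ((zstar : ℝ) / n) (1 - (zstar : ℝ) / n) →
      2 * (p : ℝ) ≤ (n : ℝ) * τ →
      (p : ℝ) / 8 ≤
        ((univ.filter (fun j : Fin p =>
          (|(zstar : ℝ) - (tstar : ℝ)| + (cycleDist p jstar kstar : ℝ)) / 4 ≤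
            (if (tstar : ℝ) ≤ (zstar : ℝ) then (1 : ℝ) else -1) *
              (((zstar : ℝ) + (cycleDist p j jstar : ℝ))
                - ((tstar : ℝ) + (cycleDist p j kstar : ℝ))))).card : ℝ) := by
  intro n p _ _ jstar kstar zstar tstar _ _ _ _ τ _ _
  rcases le_or_gt (tstar : ℝ) zstar with hle | hlt
  · refine div_eight_le_card_filter_of_imp jstar kstar fun j hj => ?_
    have hj' : (cycleDist p jstar kstar : ℝ) + 4 * cycleDist p j kstar ≤
        4 * cycleDist p j jstar := by exact_mod_cast hj
    rw [if_pos hle, abs_of_nonneg (sub_nonneg.2 hle)]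
    linarith
  · refine div_eight_le_card_filter_of_imp kstar jstar fun j hj => ?_
    have hj' : (cycleDist p jstar kstar : ℝ) + 4 * cycleDist p j jstar ≤
        4 * cycleDist p j kstar := by rw [cycleDist_comm]; exact_mod_cast hj
    rw [if_neg hlt.not_ge, abs_of_neg (sub_neg.2 hlt)]
    linarith

end
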